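/- arXiv:2310.20294 — 3 statements merged into one kernel-verified Lean document; each statement's English description precedes it below -/
import Mathlib

section
/- Let Q_a = N(a, σ²) and Q_b = N(b, σ²) with σ > 0 and a ≠ b, and let q_a, q_b denote their Lebesgue densities. Then Q_a({y : q_b(y) > q_a(y)}) = Φ(−|a − b|/(2σ)), where Φ is the standard normal CDF. -/
open MeasureTheory ProbabilityTheory Real

/-- CDF of the standard normal distribution. -/
noncomputable def stdNormalCDF (x : ℝ) : ℝ := ((gaussianReal 0 1) (Set.Iic x)).toReal

lemma g01_singleton (x : ℝ) : gaussianReal 0 1 {x} = 0 :=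
  (gaussianReal_absolutelyContinuous 0 one_ne_zero) (measure_singleton x)

lemma g01_neg_map : (gaussianReal 0 1).map (fun x : ℝ => -x) = gaussianReal 0 1 := by
  have := gaussianReal_map_const_mul (μ := 0) (v := 1) (-1)
  simp only [neg_one_mul] at this
  rw [this]
  norm_num

lemma g01_Ioi (t : ℝ) : gaussianReal 0 1 (Set.Ioi t) = gaussianReal 0 1 (Set.Iic (-t)) := by
  conv_lhs => rw [← g01_neg_map]
  rw [Measure.map_apply (measurable_neg) measurableSet_Ioi]
  have hpre : (fun x : ℝ => -x) ⁻¹' Set.Ioi t = Set.Iio (-t) := by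
    ext x; simp [lt_neg]
  rw [hpre]
  exact measure_congr (Iio_ae_eq_Iic' (g01_singleton (-t)))

lemma g01_Iio (t : ℝ) : gaussianReal 0 1 (Set.Iio t) = gaussianReal 0 1 (Set.Iic t) :=
  measure_congr (Iio_ae_eq_Iic' (g01_singleton t))

/-- For `Q_a = N(a,σ²)` and `Q_b = N(b,σ²)` with `a ≠ b`,
`Q_a({q_b > q_a}) = Φ(−|a−b|/(2σ))`. -/
theorem gaussian_measure_density_gt (σ : ℝ) (hσ : 0 < σ) (a b : ℝ) (hab : a ≠ b) :
    ((gaussianReal a (Real.toNNReal (σ ^ 2)))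
        {y | gaussianPDFReal b (Real.toNNReal (σ ^ 2)) y
              > gaussianPDFReal a (Real.toNNReal (σ ^ 2)) y}).toReal
      = stdNormalCDF (-(|a - b| / (2 * σ))) := by
  set v : NNReal := Real.toNNReal (σ ^ 2) with hv_def
  have hvR : (v : ℝ) = σ ^ 2 := Real.coe_toNNReal _ (sq_nonneg σ)
  have hvpos : (0 : ℝ) < (v : ℝ) := by rw [hvR]; positivity
  have hmap : gaussianReal a v = (gaussianReal 0 1).map (fun x => σ * x + a) := by
    have h1 : (gaussianReal 0 1).map (σ * ·) = gaussianReal 0 v := by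
      rw [gaussianReal_map_const_mul]
      congr 1
      · ring
      · ext; simp [hvR]
    have h2 : ((gaussianReal 0 v).map (· + a)) = gaussianReal a v := by
      rw [gaussianReal_map_add_const]; simp
    rw [← h2, ← h1, Measure.map_map (by fun_prop) (by fun_prop)]
    rfl
  have hiff : ∀ y, (gaussianPDFReal b v y > gaussianPDFReal a v y) ↔ (y - b)^2 < (y - a)^2 := by
    intro y
    unfold gaussianPDFReal
    have h1 : 0 < (√(2 * π * v))⁻¹ := by
      have : (0:ℝ) < 2 * π * v := by positivity
      positivity
    rw [gt_iff_lt, mul_lt_mul_iff_right₀ h1, exp_lt_exp,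
      div_lt_div_iff_of_pos_right (by positivity : (0:ℝ) < 2 * v)]
    constructor <;> intro <;> linarith
  set m : ℝ := (a + b) / 2 with hm
  rcases lt_or_gt_of_ne hab with hlt | hgt
  · -- a < b : set is Ioi m
    have hS : {y | gaussianPDFReal b v y > gaussianPDFReal a v y} = Set.Ioi m := by
      ext y
      simp only [Set.mem_setOf_eq, Set.mem_Ioi, hiff y]
      constructor <;> intro h <;> nlinarith
    rw [hS, hmap, Measure.map_apply (by fun_prop) measurableSet_Ioi]
    have hpre : (fun x => σ * x + a) ⁻¹' Set.Ioi m = Set.Ioi ((b - a) / (2 * σ)) := by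
      ext x
      simp only [Set.mem_preimage, Set.mem_Ioi, hm]
      constructor <;> intro h
      · rw [div_lt_iff₀ (by positivity)]; nlinarith
      · rw [div_lt_iff₀ (by positivity)] at h; nlinarith
    rw [hpre, g01_Ioi, stdNormalCDF]
    congr 2
    rw [abs_of_neg (by linarith : a - b < 0)]
    ring
  · -- b < a : set is Iio m
    have hS : {y | gaussianPDFReal b v y > gaussianPDFReal a v y} = Set.Iio m := by
      ext y
      simp only [Set.mem_setOf_eq, Set.mem_Iio, hiff y]
      constructor <;> intro h <;> nlinarith
    rw [hS, hmap, Measure.map_apply (by fun_prop) measurableSet_Iio]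
    have hpre : (fun x => σ * x + a) ⁻¹' Set.Iio m = Set.Iio ((b - a) / (2 * σ)) := by
      ext x
      simp only [Set.mem_preimage, Set.mem_Iio, hm]
      constructor <;> intro h
      · rw [lt_div_iff₀ (by positivity)]; nlinarith
      · rw [lt_div_iff₀ (by positivity)] at h; nlinarith
    rw [hpre, g01_Iio, stdNormalCDF]
    congr 2
    rw [abs_of_pos (by linarith : 0 < a - b)]
    ring
end

section
/- Let Q_a = N(a, σ²) and Q_b = N(b, σ²) with σ > 0, and Z a standard Gaussian random variable. Then ‖Q_a − Q_b‖_TV = P(|Z| ≤ |a − b|/(2σ)). -/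
open MeasureTheory ProbabilityTheory Real

/-- Total variation distance between two measures. -/
noncomputable def tvDist {E : Type*} [MeasurableSpace E] (P Q : Measure E) : ℝ :=
  ⨆ A : {s : Set E // MeasurableSet s}, ((P A).toReal - (Q A).toReal)

/-!
For `b ≤ a` the densities of `N(a, σ²)` and `N(b, σ²)` cross at the midpoint `m = (a + b) / 2`,
so by Scheffé's argument the supremum defining the total variation distance is attained on the
half-line `(m, ∞)`. Standardizing, this half-line has mass `P(Z > -c)` and `P(Z > c)` under the
two laws, with `c = (a - b) / (2σ)`, and the difference is `P(|Z| ≤ c)`. The case `a < b`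
follows by symmetry of the total variation distance between probability measures.
-/

open Set

section TotalVariation

variable {E : Type*} [MeasurableSpace E]

theorem tvDist_comm (P Q : Measure E) [IsProbabilityMeasure P] [IsProbabilityMeasure Q] :
    tvDist P Q = tvDist Q P := by
  have h_compl (A : {s : Set E // MeasurableSet s}) :
      (P A).toReal - (Q A).toReal = (Q ↑Aᶜ).toReal - (P ↑Aᶜ).toReal := by
    simp only [MeasurableSet.coe_compl, ← measureReal_def, probReal_compl_eq_one_sub A.2]
    ring
  unfold tvDist
  simp_rw [h_compl]
  exact compl_surjective.iSup_comp fun A : {s : Set E // MeasurableSet s} ↦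
    (Q A).toReal - (P A).toReal

theorem tvDist_eq_of_forall_le {P Q : Measure E} {S : Set E} (hS : MeasurableSet S)
    (h : ∀ A, MeasurableSet A → (P A).toReal - (Q A).toReal ≤ (P S).toReal - (Q S).toReal) :
    tvDist P Q = (P S).toReal - (Q S).toReal :=
  le_antisymm (ciSup_le fun A ↦ h A A.2)
    (le_ciSup (f := fun A : {s : Set E // MeasurableSet s} ↦ (P A).toReal - (Q A).toReal)
      ⟨_, forall_mem_range.2 fun A ↦ h A A.2⟩ ⟨S, hS⟩)

theorem setIntegral_le_setIntegral_of_nonneg_of_nonpos_compl {μ : Measure E} {h : E → ℝ}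
    (hh : Integrable h μ) {A S : Set E} (hA : MeasurableSet A) (hS : MeasurableSet S)
    (h_nonneg : ∀ x ∈ S, 0 ≤ h x) (h_nonpos : ∀ x ∉ S, h x ≤ 0) :
    ∫ x in A, h x ∂μ ≤ ∫ x in S, h x ∂μ :=
  calc ∫ x in A, h x ∂μ = ∫ x in A ∩ S, h x ∂μ + ∫ x in A \ S, h x ∂μ :=
        (integral_inter_add_sdiff hS hh.integrableOn).symm
    _ ≤ ∫ x in S, h x ∂μ + 0 := add_le_add
        (setIntegral_mono_set hh.integrableOn ((ae_restrict_iff' hS).2 (ae_of_all _ h_nonneg))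
          inter_subset_right.eventuallyLE)
        (setIntegral_nonpos (hA.diff hS) fun x hx ↦ h_nonpos x hx.2)
    _ = ∫ x in S, h x ∂μ := add_zero _

theorem tvDist_eq_of_density {μ : Measure E} {P Q : Measure E} {f g : E → ℝ}
    (hf : Integrable f μ) (hg : Integrable g μ)
    (hP : ∀ A, MeasurableSet A → (P A).toReal = ∫ x in A, f x ∂μ)
    (hQ : ∀ A, MeasurableSet A → (Q A).toReal = ∫ x in A, g x ∂μ)
    {S : Set E} (hS : MeasurableSet S) (hgf : ∀ x ∈ S, g x ≤ f x) (hfg : ∀ x ∉ S, f x ≤ g x) :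
    tvDist P Q = (P S).toReal - (Q S).toReal := by
  refine tvDist_eq_of_forall_le hS fun A hA ↦ ?_
  rw [hP A hA, hQ A hA, hP S hS, hQ S hS, ← integral_sub hf.integrableOn hg.integrableOn,
    ← integral_sub hf.integrableOn hg.integrableOn]
  exact setIntegral_le_setIntegral_of_nonneg_of_nonpos_compl (hf.sub hg) hA hS
    (fun x hx ↦ sub_nonneg.2 (hgf x hx)) fun x hx ↦ sub_nonpos.2 (hfg x hx)

end TotalVariation

theorem toReal_measure_Ioi_neg_sub_toReal_measure_Ioi (μ : Measure ℝ) [IsFiniteMeasure μ]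
    [NullSingletonClass μ] {c : ℝ} (hc : 0 ≤ c) :
    (μ (Ioi (-c))).toReal - (μ (Ioi c)).toReal = (μ {z | |z| ≤ c}).toReal := by
  have h_abs : {z : ℝ | |z| ≤ c} = Icc (-c) c := by
    ext z
    simp [abs_le]
  rw [← Ioc_union_Ioi_eq_Ioi (neg_le_self hc), measure_union (Ioc_disjoint_Ioi le_rfl)
    measurableSet_Ioi, ENNReal.toReal_add (measure_ne_top _ _) (measure_ne_top _ _), h_abs,
    measure_congr Ioc_ae_eq_Icc]
  ring

theorem toReal_gaussianReal_apply (m : ℝ) {v : NNReal} (hv : v ≠ 0) (s : Set ℝ) :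
    (gaussianReal m v s).toReal = ∫ x in s, gaussianPDFReal m v x := by
  rw [gaussianReal_apply_eq_integral m hv s,
    ENNReal.toReal_ofReal (integral_nonneg (gaussianPDFReal_nonneg m v))]

theorem gaussianPDFReal_le_gaussianPDFReal {p q : ℝ} (v : NNReal) {x : ℝ}
    (h : (x - p) ^ 2 ≤ (x - q) ^ 2) : gaussianPDFReal q v x ≤ gaussianPDFReal p v x := by
  unfold gaussianPDFReal
  gcongr

theorem gaussianReal_eq_map_affine (σ a : ℝ) :
    gaussianReal a (σ ^ 2).toNNReal = (gaussianReal 0 1).map (fun z ↦ σ * z + a) := by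
  rw [show (fun z ↦ σ * z + a) = (· + a) ∘ (σ * ·) from rfl,
    ← Measure.map_map (measurable_add_const a) (measurable_const_mul σ),
    gaussianReal_map_const_mul, gaussianReal_map_add_const, mul_zero, zero_add, mul_one]
  congr
  ext
  simp [sq_nonneg]

theorem gaussianReal_Ioi {σ : ℝ} (hσ : 0 < σ) (a m : ℝ) :
    gaussianReal a (σ ^ 2).toNNReal (Ioi m) = gaussianReal 0 1 (Ioi ((m - a) / σ)) := by
  rw [gaussianReal_eq_map_affine σ a, Measure.map_apply (by fun_prop) measurableSet_Ioi]
  congr 1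
  ext z
  simp [div_lt_iff₀ hσ, sub_lt_iff_lt_add, mul_comm]

theorem tvDist_gaussianReal_of_le {σ : ℝ} (hσ : 0 < σ) {a b : ℝ} (hba : b ≤ a) :
    tvDist (gaussianReal a (σ ^ 2).toNNReal) (gaussianReal b (σ ^ 2).toNNReal)
      = (gaussianReal 0 1 {z | |z| ≤ (a - b) / (2 * σ)}).toReal := by
  have hv : (σ ^ 2).toNNReal ≠ 0 := by simp [hσ.ne']
  have := nullSingletonClass_gaussianReal (μ := 0) one_ne_zero
  have h_right : ∀ x ∈ Ioi ((a + b) / 2),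
      gaussianPDFReal b (σ ^ 2).toNNReal x ≤ gaussianPDFReal a (σ ^ 2).toNNReal x :=
    fun x (hx : (a + b) / 2 < x) ↦ gaussianPDFReal_le_gaussianPDFReal _ (by nlinarith)
  have h_left : ∀ x ∉ Ioi ((a + b) / 2),
      gaussianPDFReal a (σ ^ 2).toNNReal x ≤ gaussianPDFReal b (σ ^ 2).toNNReal x :=
    fun x (hx : ¬(a + b) / 2 < x) ↦
      gaussianPDFReal_le_gaussianPDFReal _ (by nlinarith [not_lt.1 hx])
  have hma : ((a + b) / 2 - a) / σ = -((a - b) / (2 * σ)) := by field_simp; ring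
  have hmb : ((a + b) / 2 - b) / σ = (a - b) / (2 * σ) := by field_simp; ring
  rw [tvDist_eq_of_density (integrable_gaussianPDFReal a _) (integrable_gaussianPDFReal b _)
      (fun A _ ↦ toReal_gaussianReal_apply a hv A) (fun A _ ↦ toReal_gaussianReal_apply b hv A)
      measurableSet_Ioi h_right h_left,
    gaussianReal_Ioi hσ, gaussianReal_Ioi hσ, hma, hmb,
    toReal_measure_Ioi_neg_sub_toReal_measure_Ioi _ (div_nonneg (sub_nonneg.2 hba) (by positivity))]

/-- `‖N(a,σ²) − N(b,σ²)‖_TV = P(|Z| ≤ |a−b|/(2σ))` for a standard Gaussian `Z`. -/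
theorem tv_gaussian_eq_prob_abs_le (σ : ℝ) (hσ : 0 < σ) (a b : ℝ) :
    tvDist (gaussianReal a (Real.toNNReal (σ ^ 2))) (gaussianReal b (Real.toNNReal (σ ^ 2)))
      = ((gaussianReal 0 1) {z | |z| ≤ |a - b| / (2 * σ)}).toReal := by
  rcases le_total b a with hba | hab
  · rw [tvDist_gaussianReal_of_le hσ hba, abs_of_nonneg (sub_nonneg.2 hba)]
  · rw [tvDist_comm, tvDist_gaussianReal_of_le hσ hab, abs_sub_comm,
      abs_of_nonneg (sub_nonneg.2 hab)]
end

section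
/- With the notation of the previous context, defining ℓ(Q,Q') = ∫_𝒲 ‖Q(w) − Q'(w)‖_TV dP_W(w), one has E[t(W,Y)] ≥ ℓ(Q_{f₁}, Q_{f₂}) − ℓ(Q*, Q_{f₂}), where t(w,y) = 1{q_{f₂(w)}(y) > q_{f₁(w)}(y)} − Q_{f₁(w)}({q_{f₂(w)} > q_{f₁(w)}}). -/
/-!
Write `N_i = 𝒩(f_i w, σ²)` and `A_w = {q_{f₂(w)} > q_{f₁(w)}}`. By Scheffé's identity
`‖N₁ - N₂‖_TV = N₂(A_w) - N₁(A_w)`, while testing `‖Q*(w) - N₂‖_TV` on `A_w` gives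
`‖Q*(w) - N₂‖_TV ≥ N₂(A_w) - Q*(w)(A_w)`. Subtracting, the conditional mean
`Q*(w)(A_w) - N₁(A_w)` of `t(w, ·)` dominates the difference of the two distances for every `w`,
and one integrates against `P_W`. The integrals are not junk because `w ↦ ‖κ w - η w‖_TV` is
measurable for kernels on a countably generated space: Scheffé's identity with respect to
`κ + η` writes it as the integral of a jointly measurable function of `(w, y)`.
-/

open MeasureTheory ProbabilityTheory

open scoped NNReal

section tvDist

variable {E : Type*} [MeasurableSpace E] {μ ν : Measure E}

theorem tvDist_bddAbove [IsFiniteMeasure μ] :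
    BddAbove (Set.range fun s : {s : Set E // MeasurableSet s} => μ.real s - ν.real s) :=
  ⟨μ.real Set.univ, Set.forall_mem_range.2 fun s =>
    (sub_le_self _ measureReal_nonneg).trans (measureReal_mono (Set.subset_univ _))⟩

theorem measureReal_sub_measureReal_le_tvDist [IsFiniteMeasure μ] {s : Set E}
    (hs : MeasurableSet s) : μ.real s - ν.real s ≤ tvDist μ ν :=
  le_ciSup tvDist_bddAbove ⟨s, hs⟩

theorem tvDist_nonneg [IsFiniteMeasure μ] : 0 ≤ tvDist μ ν := by
  simpa using measureReal_sub_measureReal_le_tvDist (μ := μ) (ν := ν) MeasurableSet.empty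

theorem tvDist_le_one [IsProbabilityMeasure μ] : tvDist μ ν ≤ 1 :=
  ciSup_le fun _ => (sub_le_self _ measureReal_nonneg).trans measureReal_le_one

theorem tvDist_le_tvDist_swap [IsProbabilityMeasure μ] [IsProbabilityMeasure ν] :
    tvDist μ ν ≤ tvDist ν μ :=
  ciSup_le fun s => by
    have h := measureReal_sub_measureReal_le_tvDist (μ := ν) (ν := μ) s.2.compl
    rwa [probReal_compl_eq_one_sub s.2, probReal_compl_eq_one_sub s.2,
      sub_sub_sub_cancel_left] at h

theorem tvDist_comm_s11 [IsProbabilityMeasure μ] [IsProbabilityMeasure ν] :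
    tvDist μ ν = tvDist ν μ :=
  le_antisymm tvDist_le_tvDist_swap tvDist_le_tvDist_swap

theorem setIntegral_le_setIntegral_pos {ρ : Measure E} {f : E → ℝ} (hf : Integrable f ρ)
    (hfm : Measurable f) {s : Set E} (hs : MeasurableSet s) :
    ∫ x in s, f x ∂ρ ≤ ∫ x in {x | 0 < f x}, f x ∂ρ := by
  have hpos : MeasurableSet {x | 0 < f x} := measurableSet_lt measurable_const hfm
  calc ∫ x in s, f x ∂ρ ≤ ∫ x in s, {x | 0 < f x}.indicator f x ∂ρ := by
        refine setIntegral_mono_on hf.integrableOn (hf.indicator hpos).integrableOn hs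
          fun x _ => ?_
        by_cases hx : 0 < f x
        · simp [hx]
        · simpa [hx] using not_lt.mp hx
    _ = ∫ x in s ∩ {x | 0 < f x}, f x ∂ρ := setIntegral_indicator hpos
    _ ≤ ∫ x in {x | 0 < f x}, f x ∂ρ :=
        setIntegral_mono_set hf.integrableOn (ae_restrict_of_forall_mem hpos fun _ hx => hx.le)
          Set.inter_subset_right.eventuallyLE

/-- Scheffé's identity. -/
theorem tvDist_eq_setIntegral_sub_of_density {ρ : Measure E} {p q : E → ℝ}
    (hp : Integrable p ρ) (hq : Integrable q ρ) (hpm : Measurable p) (hqm : Measurable q)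
    (hμ : ∀ s, MeasurableSet s → μ.real s = ∫ x in s, p x ∂ρ)
    (hν : ∀ s, MeasurableSet s → ν.real s = ∫ x in s, q x ∂ρ) :
    tvDist μ ν = ∫ x in {x | q x < p x}, (p x - q x) ∂ρ := by
  have hdiff : ∀ s, MeasurableSet s → μ.real s - ν.real s = ∫ x in s, (p x - q x) ∂ρ :=
    fun s hs => by rw [hμ s hs, hν s hs, integral_sub hp.integrableOn hq.integrableOn]
  have hbound : ∀ s, MeasurableSet s →
      μ.real s - ν.real s ≤ ∫ x in {x | q x < p x}, (p x - q x) ∂ρ := fun s hs => by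
    simpa only [hdiff s hs, Pi.sub_apply, sub_pos] using
      setIntegral_le_setIntegral_pos (hp.sub hq) (hpm.sub hqm) hs
  have hS : MeasurableSet {x | q x < p x} := measurableSet_lt hqm hpm
  refine le_antisymm (ciSup_le fun s => hbound s.1 s.2) ?_
  rw [← hdiff _ hS]
  exact le_ciSup ⟨_, Set.forall_mem_range.2 fun s => hbound s.1 s.2⟩ (⟨_, hS⟩ : {s // _})

theorem integral_ite_one_zero_sub [IsProbabilityMeasure μ] {P : E → Prop} [DecidablePred P]
    (hP : MeasurableSet {x | P x}) (c : ℝ) :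
    ∫ x, ((if P x then 1 else 0) - c) ∂μ = μ.real {x | P x} - c := by
  have hind : (fun x => if P x then (1 : ℝ) else 0) = {x | P x}.indicator 1 := by
    ext x; simp [Set.indicator_apply]
  rw [integral_sub (hind ▸ (integrable_const (1 : ℝ)).indicator hP) (integrable_const c), hind,
    integral_indicator_one hP, integral_const, probReal_univ, one_smul]

end tvDist

namespace ProbabilityTheory.Kernel

theorem integrable_measureReal_prodMk_left {α β : Type*} [MeasurableSpace α]
    [MeasurableSpace β] {μ : Measure α} [IsFiniteMeasure μ] (κ : Kernel α β)
    [IsMarkovKernel κ] {t : Set (α × β)} (ht : MeasurableSet t) :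
    Integrable (fun a => (κ a).real (Prod.mk a ⁻¹' t)) μ :=
  .of_bound (measurable_kernel_prodMk_left ht).ennreal_toReal.aestronglyMeasurable 1
    (ae_of_all _ fun _ => by
      rw [Real.norm_of_nonneg measureReal_nonneg]; exact measureReal_le_one)

variable {α γ : Type*} [MeasurableSpace α] [MeasurableSpace γ]
  [MeasurableSpace.CountableOrCountablyGenerated α γ]

theorem measureReal_eq_setIntegral_toReal_rnDeriv {κ ξ : Kernel α γ} [IsFiniteKernel κ]
    [IsFiniteKernel ξ] {a : α} (hκξ : κ a ≪ ξ a) (s : Set γ) :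
    (κ a).real s = ∫ x in s, (κ.rnDeriv ξ a x).toReal ∂ξ a := by
  rw [← Measure.setIntegral_toReal_rnDeriv hκξ s]
  exact integral_congr_ae (ae_restrict_of_ae (rnDeriv_eq_rnDeriv_measure.mono
    fun _ hx => congrArg ENNReal.toReal hx.symm))

theorem integrable_toReal_rnDeriv {κ ξ : Kernel α γ} [IsFiniteKernel κ]
    [IsFiniteKernel ξ] (a : α) :
    Integrable (fun x => (κ.rnDeriv ξ a x).toReal) (ξ a) :=
  Measure.integrable_toReal_rnDeriv.congr (rnDeriv_eq_rnDeriv_measure.mono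
    fun _ hx => congrArg ENNReal.toReal hx.symm)

theorem measurable_tvDist (κ η : Kernel α γ) [IsFiniteKernel κ] [IsFiniteKernel η] :
    Measurable fun a => tvDist (κ a) (η a) := by
  set p : α × γ → ℝ := fun z => (κ.rnDeriv (κ + η) z.1 z.2).toReal
  set q : α × γ → ℝ := fun z => (η.rnDeriv (κ + η) z.1 z.2).toReal
  have hpm : Measurable p := (measurable_rnDeriv _ _).ennreal_toReal
  have hqm : Measurable q := (measurable_rnDeriv _ _).ennreal_toReal
  have hS : MeasurableSet {z | q z < p z} := measurableSet_lt hqm hpm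
  have htv : ∀ a, tvDist (κ a) (η a) =
      ∫ x, {z | q z < p z}.indicator (fun z => p z - q z) (a, x) ∂(κ + η) a := fun a => by
    rw [tvDist_eq_setIntegral_sub_of_density (integrable_toReal_rnDeriv a)
      (integrable_toReal_rnDeriv a) (measurable_rnDeriv_right _ _ a).ennreal_toReal
      (measurable_rnDeriv_right _ _ a).ennreal_toReal
      (fun s _ => measureReal_eq_setIntegral_toReal_rnDeriv (ξ := κ + η)
        (Measure.AbsolutelyContinuous.rfl.add_right (η a)) s)
      (fun s _ => measureReal_eq_setIntegral_toReal_rnDeriv (ξ := κ + η)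
        (Measure.AbsolutelyContinuous.rfl.add_right' (κ a)) s)]
    exact (integral_indicator (measurable_prodMk_left hS)).symm
  simp only [htv]
  exact (((hpm.sub hqm).indicator hS).stronglyMeasurable.integral_kernel_prod_right').measurable

theorem integrable_tvDist {μ : Measure α} [IsFiniteMeasure μ] (κ η : Kernel α γ)
    [IsMarkovKernel κ] [IsFiniteKernel η] : Integrable (fun a => tvDist (κ a) (η a)) μ :=
  .of_bound (measurable_tvDist κ η).aestronglyMeasurable 1 (ae_of_all _ fun _ => by
    rw [Real.norm_of_nonneg tvDist_nonneg]; exact tvDist_le_one)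

end ProbabilityTheory.Kernel

section Gaussian

theorem measureReal_gaussianReal (m : ℝ) {v : ℝ≥0} (hv : v ≠ 0) (s : Set ℝ) :
    (gaussianReal m v).real s = ∫ x in s, gaussianPDFReal m v x := by
  rw [measureReal_def, gaussianReal_apply_eq_integral _ hv,
    ENNReal.toReal_ofReal (integral_nonneg fun x => gaussianPDFReal_nonneg _ _ _)]

theorem tvDist_gaussianReal (m₁ m₂ : ℝ) {v : ℝ≥0} (hv : v ≠ 0) :
    tvDist (gaussianReal m₁ v) (gaussianReal m₂ v) =
      (gaussianReal m₂ v).real {y | gaussianPDFReal m₁ v y < gaussianPDFReal m₂ v y}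
        - (gaussianReal m₁ v).real {y | gaussianPDFReal m₁ v y < gaussianPDFReal m₂ v y} := by
  rw [tvDist_comm_s11, tvDist_eq_setIntegral_sub_of_density (integrable_gaussianPDFReal m₂ v)
    (integrable_gaussianPDFReal m₁ v) (measurable_gaussianPDFReal _ _)
    (measurable_gaussianPDFReal _ _) (fun s _ => measureReal_gaussianReal m₂ hv s)
    (fun s _ => measureReal_gaussianReal m₁ hv s), measureReal_gaussianReal _ hv,
    measureReal_gaussianReal _ hv, integral_sub (integrable_gaussianPDFReal _ _).integrableOn
    (integrable_gaussianPDFReal _ _).integrableOn]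

variable {W : Type*} [MeasurableSpace W]

noncomputable def gaussianRealKernel {f : W → ℝ} (hf : Measurable f) (v : ℝ≥0) :
    Kernel W ℝ :=
  ⟨fun w => gaussianReal (f w) v, measurable_gaussianReal.comp (hf.prodMk measurable_const)⟩

instance {f : W → ℝ} (hf : Measurable f) (v : ℝ≥0) :
    IsMarkovKernel (gaussianRealKernel hf v) :=
  ⟨fun w => inferInstanceAs (IsProbabilityMeasure (gaussianReal (f w) v))⟩

end Gaussian

/-- With `ℓ(Q,Q') = ∫ ‖Q(w) − Q'(w)‖_TV dP_W(w)`, the test statistic satisfies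
`E[t(W,Y)] ≥ ℓ(Q_{f₁}, Q_{f₂}) − ℓ(Q*, Q_{f₂})`. -/
theorem expectation_t_ge {W : Type*} [MeasurableSpace W]
    (P_W : Measure W) [IsProbabilityMeasure P_W]
    (Qstar : Kernel W ℝ) [IsMarkovKernel Qstar]
    (f₁ f₂ : W → ℝ) (hf₁ : Measurable f₁) (hf₂ : Measurable f₂)
    (σ : ℝ) (hσ : 0 < σ) :
    (∫ w, ∫ y,
        ((if gaussianPDFReal (f₁ w) (Real.toNNReal (σ ^ 2)) y
              < gaussianPDFReal (f₂ w) (Real.toNNReal (σ ^ 2)) y then (1 : ℝ) else 0)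
          - ((gaussianReal (f₁ w) (Real.toNNReal (σ ^ 2)))
              {y' | gaussianPDFReal (f₁ w) (Real.toNNReal (σ ^ 2)) y'
                    < gaussianPDFReal (f₂ w) (Real.toNNReal (σ ^ 2)) y'}).toReal)
        ∂(Qstar w) ∂P_W)
      ≥ (∫ w, tvDist (gaussianReal (f₁ w) (Real.toNNReal (σ ^ 2)))
              (gaussianReal (f₂ w) (Real.toNNReal (σ ^ 2))) ∂P_W)
        - ∫ w, tvDist (Qstar w) (gaussianReal (f₂ w) (Real.toNNReal (σ ^ 2))) ∂P_W := by
  set v := Real.toNNReal (σ ^ 2)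
  have hv : v ≠ 0 := by simpa [v] using hσ.ne'
  let A : W → Set ℝ :=
    fun w => {y | gaussianPDFReal (f₁ w) v y < gaussianPDFReal (f₂ w) v y}
  have hS : MeasurableSet
      {z : W × ℝ | gaussianPDFReal (f₁ z.1) v z.2 < gaussianPDFReal (f₂ z.1) v z.2} :=
    measurableSet_lt (by fun_prop) (by fun_prop)
  have hA (w : W) : MeasurableSet (A w) := measurable_prodMk_left hS
  let H : W → ℝ := fun w => (Qstar w).real (A w) - (gaussianReal (f₁ w) v).real (A w)
  have hpoint (w : W) : tvDist (gaussianReal (f₁ w) v) (gaussianReal (f₂ w) v)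
      ≤ H w + tvDist (Qstar w) (gaussianReal (f₂ w) v) := by
    rw [tvDist_gaussianReal _ _ hv, tvDist_comm_s11 (μ := Qstar w)]
    linarith [measureReal_sub_measureReal_le_tvDist (μ := gaussianReal (f₂ w) v) (ν := Qstar w)
      (hA w)]
  have hH : Integrable H P_W := (Qstar.integrable_measureReal_prodMk_left hS).sub
    ((gaussianRealKernel hf₁ v).integrable_measureReal_prodMk_left hS)
  have hG₁ :
      Integrable (fun w => tvDist (gaussianReal (f₁ w) v) (gaussianReal (f₂ w) v)) P_W :=
    Kernel.integrable_tvDist (gaussianRealKernel hf₁ v) (gaussianRealKernel hf₂ v)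
  have hG₂ : Integrable (fun w => tvDist (Qstar w) (gaussianReal (f₂ w) v)) P_W :=
    Kernel.integrable_tvDist Qstar (gaussianRealKernel hf₂ v)
  rw [integral_congr_ae (ae_of_all _ fun w => integral_ite_one_zero_sub (μ := Qstar w) (hA w) _),
    ge_iff_le, sub_le_iff_le_add]
  calc _ ≤ ∫ w, (H w + tvDist (Qstar w) (gaussianReal (f₂ w) v)) ∂P_W :=
        integral_mono hG₁ (hH.add hG₂) hpoint
    _ = _ := integral_add hH hG₂
end
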